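/- Let m ≥ 1 and let F_i, F_j ∈ ℝ^{m×2}. Then the supremum over all orthogonal matrices Q ∈ O(2) of tr(F_i Qᵀ F_jᵀ) equals √(‖F_iᵀF_j‖_F² + 2·|det(F_iᵀF_j)|), which is the sum of the two singular values of the 2×2 matrix F_iᵀF_j. -/

import Mathlib

open Matrix

/-- The Frobenius norm of a real matrix. -/
noncomputable def frobNorm {m n : ℕ} (A : Matrix (Fin m) (Fin n) ℝ) : ℝ :=
  Real.sqrt (Matrix.trace (Aᵀ * A))

/-!
Writing `A = F_iᵀ F_j`, one has `tr(F_i Qᵀ F_jᵀ) = tr(Q A)`. Every `Q ∈ O(2)` has the form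
`!![x, -ε z; z, ε x]` with `x² + z² = 1` and `ε = det Q = ±1`, and then
`tr(Q A) = x (a + ε d) + z (b - ε c)`. By Cauchy–Schwarz in `ℝ²` its maximum over the unit circle
is `√((a + ε d)² + (b - ε c)²) = √(‖A‖_F² + 2 ε det A)`, and the better sign is `ε det A = |det A|`.
-/

theorem Matrix.trace_mul_transpose_mul_transpose {R : Type*} [CommSemiring R] {m n : Type*}
    [Fintype m] [Fintype n] (F G : Matrix m n R) (Q : Matrix n n R) :
    trace (F * Qᵀ * Gᵀ) = trace (Q * (Fᵀ * G)) := by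
  rw [← trace_transpose, transpose_mul, transpose_mul, transpose_transpose, transpose_transpose,
    trace_mul_comm, Matrix.mul_assoc]

theorem frobNorm_sq {m n : ℕ} (A : Matrix (Fin m) (Fin n) ℝ) :
    frobNorm A ^ 2 = ∑ i, ∑ j, A i j ^ 2 := by
  have h : trace (Aᵀ * A) = ∑ i, ∑ j, A i j ^ 2 := by
    rw [trace, Finset.sum_comm]
    simp only [diag_apply, mul_apply, transpose_apply, sq]
  rw [frobNorm, h, Real.sq_sqrt (by positivity)]

theorem transpose_mul_self_eq_one_iff_fin_two (Q : Matrix (Fin 2) (Fin 2) ℝ) :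
    Qᵀ * Q = 1 ↔
      ∃ x z ε : ℝ, x ^ 2 + z ^ 2 = 1 ∧ ε ^ 2 = 1 ∧ Q = !![x, -(ε * z); z, ε * x] := by
  constructor
  · intro hQ
    have h00 := congrFun₂ hQ 0 0
    have h01 := congrFun₂ hQ 0 1
    have h11 := congrFun₂ hQ 1 1
    simp only [mul_apply, transpose_apply, Fin.sum_univ_two, one_apply_eq,
      one_apply_ne (show (0 : Fin 2) ≠ 1 by decide)] at h00 h01 h11
    obtain ⟨ε, hε_det⟩ : ∃ ε, ε = Q 0 0 * Q 1 1 - Q 0 1 * Q 1 0 := ⟨_, rfl⟩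
    have hε : ε ^ 2 = 1 := by
      linear_combination (Q 0 1 ^ 2 + Q 1 1 ^ 2) * h00 + h11
        - (Q 0 0 * Q 0 1 + Q 1 0 * Q 1 1) * h01 + (ε + Q 0 0 * Q 1 1 - Q 0 1 * Q 1 0) * hε_det
    have hcol : (Q 1 1 - ε * Q 0 0) ^ 2 + (Q 0 1 + ε * Q 1 0) ^ 2 = 0 := by
      linear_combination ε ^ 2 * h00 + h11 + 2 * ε * hε_det - hε
    have h₁ : Q 1 1 = ε * Q 0 0 := by
      nlinarith [sq_nonneg (Q 1 1 - ε * Q 0 0), sq_nonneg (Q 0 1 + ε * Q 1 0)]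
    have h₂ : Q 0 1 = -(ε * Q 1 0) := by
      nlinarith [sq_nonneg (Q 1 1 - ε * Q 0 0), sq_nonneg (Q 0 1 + ε * Q 1 0)]
    refine ⟨Q 0 0, Q 1 0, ε, by linear_combination h00, hε, ?_⟩
    ext i j
    fin_cases i <;> fin_cases j <;> simp [h₁, h₂]
  · rintro ⟨x, z, ε, hxz, hε, rfl⟩
    ext i j
    fin_cases i <;> fin_cases j <;> simp [mul_apply, Fin.sum_univ_two]
    · linear_combination hxz
    · ring
    · ring
    · linear_combination ε ^ 2 * hxz + hε

theorem trace_rotoreflection_mul (x z ε : ℝ) (A : Matrix (Fin 2) (Fin 2) ℝ) :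
    trace (!![x, -(ε * z); z, ε * x] * A) = x * (A 0 0 + ε * A 1 1) + z * (A 0 1 - ε * A 1 0) := by
  rw [trace_fin_two]
  simp only [mul_apply, Fin.sum_univ_two, of_apply, cons_val', cons_val_zero, cons_val_one,
    empty_val', cons_val_fin_one]
  ring

theorem sq_add_sq_eq_frobNorm_sq_add_det (A : Matrix (Fin 2) (Fin 2) ℝ) {ε : ℝ} (hε : ε ^ 2 = 1) :
    (A 0 0 + ε * A 1 1) ^ 2 + (A 0 1 - ε * A 1 0) ^ 2 = frobNorm A ^ 2 + 2 * ε * A.det := by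
  rw [frobNorm_sq, det_fin_two]
  simp only [Fin.sum_univ_two]
  linear_combination (A 1 1 ^ 2 + A 1 0 ^ 2) * hε

theorem mul_add_mul_le_sqrt_sq_add_sq {x z : ℝ} (hxz : x ^ 2 + z ^ 2 = 1) (p q : ℝ) :
    x * p + z * q ≤ √(p ^ 2 + q ^ 2) :=
  (le_abs_self _).trans <| Real.abs_le_sqrt <| by
    nlinarith [sq_nonneg (x * q - z * p)]

theorem exists_mul_add_mul_eq_sqrt_sq_add_sq (p q : ℝ) :
    ∃ x z : ℝ, x ^ 2 + z ^ 2 = 1 ∧ x * p + z * q = √(p ^ 2 + q ^ 2) := by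
  set w : ℂ := ⟨p, q⟩
  have hw : ‖w‖ = √(p ^ 2 + q ^ 2) := by
    rw [Complex.norm_def, Complex.normSq_apply, ← sq, ← sq]
  refine ⟨Real.cos w.arg, Real.sin w.arg, Real.cos_sq_add_sin_sq _, ?_⟩
  -- `(cos (arg w), sin (arg w))` is the unit vector in the direction of `(p, q)`.
  calc Real.cos w.arg * p + Real.sin w.arg * q
      = Real.cos w.arg * (‖w‖ * Real.cos w.arg) + Real.sin w.arg * (‖w‖ * Real.sin w.arg) := by
        rw [Complex.norm_mul_cos_arg, Complex.norm_mul_sin_arg]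
    _ = ‖w‖ := by linear_combination ‖w‖ * Real.cos_sq_add_sin_sq w.arg
    _ = √(p ^ 2 + q ^ 2) := hw

theorem isGreatest_trace_orthogonal_mul (A : Matrix (Fin 2) (Fin 2) ℝ) :
    IsGreatest {t : ℝ | ∃ Q : Matrix (Fin 2) (Fin 2) ℝ, Qᵀ * Q = 1 ∧ t = trace (Q * A)}
      (√(frobNorm A ^ 2 + 2 * |A.det|)) := by
  constructor
  · obtain ⟨ε, hε, hε_det⟩ : ∃ ε : ℝ, ε ^ 2 = 1 ∧ ε * A.det = |A.det| := by
      rcases abs_cases A.det with ⟨h, -⟩ | ⟨h, -⟩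
      · exact ⟨1, by norm_num, by rw [h, one_mul]⟩
      · exact ⟨-1, by norm_num, by rw [h, neg_one_mul]⟩
    obtain ⟨x, z, hxz, hmax⟩ :=
      exists_mul_add_mul_eq_sqrt_sq_add_sq (A 0 0 + ε * A 1 1) (A 0 1 - ε * A 1 0)
    refine ⟨_, (transpose_mul_self_eq_one_iff_fin_two _).2 ⟨x, z, ε, hxz, hε, rfl⟩, ?_⟩
    rw [trace_rotoreflection_mul, hmax, sq_add_sq_eq_frobNorm_sq_add_det A hε, mul_assoc, hε_det]
  · rintro _ ⟨Q, hQ, rfl⟩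
    obtain ⟨x, z, ε, hxz, hε, rfl⟩ := (transpose_mul_self_eq_one_iff_fin_two Q).1 hQ
    have hε_det : ε * A.det ≤ |A.det| := by
      rcases sq_eq_one_iff.1 hε with rfl | rfl
      · simpa using le_abs_self A.det
      · simpa using neg_le_abs A.det
    calc trace (!![x, -(ε * z); z, ε * x] * A)
        ≤ √((A 0 0 + ε * A 1 1) ^ 2 + (A 0 1 - ε * A 1 0) ^ 2) := by
          rw [trace_rotoreflection_mul]; exact mul_add_mul_le_sqrt_sq_add_sq hxz _ _
      _ = √(frobNorm A ^ 2 + 2 * ε * A.det) := by rw [sq_add_sq_eq_frobNorm_sq_add_det A hε]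
      _ ≤ √(frobNorm A ^ 2 + 2 * |A.det|) := Real.sqrt_le_sqrt (by linarith)

theorem stmt4_general (m : ℕ) (Fi Fj : Matrix (Fin m) (Fin 2) ℝ) :
    sSup {x : ℝ | ∃ Q : Matrix (Fin 2) (Fin 2) ℝ,
        Qᵀ * Q = 1 ∧ x = Matrix.trace (Fi * Qᵀ * Fjᵀ)}
      = Real.sqrt ((frobNorm (Fiᵀ * Fj)) ^ 2 + 2 * |(Fiᵀ * Fj).det|) := by
  simp_rw [trace_mul_transpose_mul_transpose]
  exact (isGreatest_trace_orthogonal_mul _).csSup_eq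

/-- The supremum over orthogonal `Q ∈ O(2)` of `tr(F_i Qᵀ F_jᵀ)` equals
`√(‖F_iᵀF_j‖_F² + 2|det(F_iᵀF_j)|)`, the sum of the two singular values of
`F_iᵀF_j`. -/
theorem stmt4 (m : ℕ) (hm : 1 ≤ m) (Fi Fj : Matrix (Fin m) (Fin 2) ℝ) :
    sSup {x : ℝ | ∃ Q : Matrix (Fin 2) (Fin 2) ℝ,
        Qᵀ * Q = 1 ∧ x = Matrix.trace (Fi * Qᵀ * Fjᵀ)}
      = Real.sqrt ((frobNorm (Fiᵀ * Fj)) ^ 2 + 2 * |(Fiᵀ * Fj).det|) :=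
  stmt4_general m Fi Fj
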